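/- Let d ≥ 1 be an integer, 0 < α < 1/2, and δ, K > 0. Suppose U is continuously differentiable on (0,δ] with (1/2)r − U(r) > 0, |U'(r) + (d−1)U(r)/r − dα| ≤ K r^{dα} and |U(r) − αr| ≤ K r^{1+dα} for all r ∈ (0,δ]. Define P(r) := P_δ · exp(−∫_r^δ (U'(s) + (d−1)U(s)/s)/(s/2 − U(s)) ds) for a given P_δ > 0. Then there exist a constant c > 0 and a constant C > 0 (depending on d, α, K, δ) such that for all r ∈ (0,δ]: |P(r) − c·P_δ·(r/δ)^{2dα/(1−2α)}| ≤ C·P_δ·(r/δ)^{2dα/(1−2α)}·r^{dα}. In particular, P extends to a function on [0,δ] with P(0) = 0 that is Hölder continuous of exponent 2dα/(1−2α) at the origin. -/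

import Mathlib

open Real MeasureTheory Filter Set
open scoped Topology

noncomputable section

/-- `P(r) = P_δ exp(−∫_r^δ (U'+(d−1)U/s)/(s/2−U) ds)`, written as an oriented
interval integral from `δ` to `r`. -/
def Pvac (d : ℕ) (δ Pδ : ℝ) (U : ℝ → ℝ) (r : ℝ) : ℝ :=
  Pδ * Real.exp (∫ s in δ..r, (deriv U s + ((d : ℝ) - 1) * U s / s) / (s / 2 - U s))

/-!
With `a = dα` and `β = 2dα/(1−2α)`, so that `β (1/2 − α) = a`, the hypotheses say
`U(s)/s = α + O(s^a)` and `U' + (d−1)U/s = a + O(s^a)`. Since the denominator `s/2 − U(s)` is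
bounded below by a multiple of `s`, the integrand of `P` is `β/s + g(s)` with `g(s) = O(s^(a−1))`,
which is integrable at `0`. Hence `P(r) = P_δ (r/δ)^β exp(G(r) − G(δ))` with
`G(r) = ∫_0^r g = O(r^a)`, and the expansion holds with `c = exp(−G(δ))`.
-/

lemma abs_exp_sub_one_le_mul_exp_abs (x : ℝ) : |exp x - 1| ≤ |x| * exp |x| := by
  simpa [← Complex.ofReal_exp, ← Complex.ofReal_one, ← Complex.ofReal_sub, Complex.norm_real]
    using Complex.norm_exp_sub_sum_le_norm_mul_exp x 1

lemma tendsto_rpow_nhdsGT_zero {a : ℝ} (ha : 0 < a) :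
    Tendsto (fun s : ℝ => s ^ a) (𝓝[>] 0) (𝓝 0) := by
  simpa [zero_rpow ha.ne'] using
    (continuousAt_rpow_const 0 a (Or.inr ha.le)).tendsto.mono_left nhdsWithin_le_nhds

lemma tendsto_nhdsGT_zero_of_abs_le_rpow {P : ℝ → ℝ} {A β δ : ℝ} (hβ : 0 < β) (hδ : 0 < δ)
    (hP : ∀ r ∈ Ioc 0 δ, |P r| ≤ A * r ^ β) : Tendsto P (𝓝[>] 0) (𝓝 0) := by
  have hA : Tendsto (fun r : ℝ => A * r ^ β) (𝓝[>] 0) (𝓝 0) := by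
    simpa using (tendsto_rpow_nhdsGT_zero hβ).const_mul A
  refine squeeze_zero_norm' ?_ hA
  filter_upwards [Ioc_mem_nhdsGT hδ] with r hr
  exact hP r hr

lemma exists_pos_mul_le_of_continuousOn {D : ℝ → ℝ} {δ ε : ℝ} (hε : 0 < ε)
    (hD : ContinuousOn D (Ioc 0 δ)) (hpos : ∀ s ∈ Ioc 0 δ, 0 < D s)
    (hnear : ∀ᶠ s in 𝓝[>] 0, ε * s ≤ D s) :
    ∃ m > 0, ∀ s ∈ Ioc 0 δ, m * s ≤ D s := by
  obtain ⟨u, hu : 0 < u, hsmall⟩ := mem_nhdsGT_iff_exists_Ioc_subset.mp hnear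
  rcases le_or_gt δ u with hδu | huδ
  · exact ⟨ε, hε, fun s hs => hsmall ⟨hs.1, hs.2.trans hδu⟩⟩
  obtain ⟨x, hx, hxmin⟩ := isCompact_Icc.exists_isMinOn (nonempty_Icc.mpr huδ.le)
    (hD.mono fun s hs => ⟨hu.trans_le hs.1, hs.2⟩)
  have hDx : 0 < D x := hpos x ⟨hu.trans_le hx.1, hx.2⟩
  have hδ : 0 < δ := hu.trans huδ
  refine ⟨min ε (D x / δ), lt_min hε (div_pos hDx hδ), fun s hs => ?_⟩
  rcases le_or_gt s u with hsu | hus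
  · exact (mul_le_mul_of_nonneg_right (min_le_left _ _) hs.1.le).trans (hsmall ⟨hs.1, hsu⟩)
  · calc min ε (D x / δ) * s ≤ D x / δ * δ :=
          mul_le_mul (min_le_right _ _) hs.2 hs.1.le (div_pos hDx hδ).le
      _ = D x := div_mul_cancel₀ _ hδ.ne'
      _ ≤ D s := hxmin ⟨hus.le, hs.2⟩

lemma eventually_mul_le_half_sub {U : ℝ → ℝ} {α a K δ : ℝ} (hα : α < 1 / 2) (ha : 0 < a)
    (hδ : 0 < δ) (hU : ∀ s ∈ Ioc 0 δ, |U s - α * s| ≤ K * s ^ (1 + a)) :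
    ∀ᶠ s in 𝓝[>] 0, (1 / 2 - α) / 2 * s ≤ s / 2 - U s := by
  have hsmall : ∀ᶠ s in 𝓝[>] (0 : ℝ), K * s ^ a < (1 / 2 - α) / 2 := by
    have hlim := (tendsto_rpow_nhdsGT_zero ha).const_mul K
    rw [mul_zero] at hlim
    exact hlim.eventually (gt_mem_nhds (by linarith))
  filter_upwards [hsmall, Ioc_mem_nhdsGT hδ] with s hKs hs
  have hUs := (abs_le.mp (hU s hs)).2
  rw [rpow_add hs.1, rpow_one] at hUs
  nlinarith [mul_le_mul_of_nonneg_left hKs.le hs.1.le]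

/-- `N` stands for `U' + (d−1)U/s` and `u` for `U(s)`. -/
lemma abs_div_sub_inv_le {N u s α β a K m : ℝ} (hs : 0 < s) (hm : 0 < m) (hβ : 0 < β)
    (hβa : β * (1 / 2 - α) = a) (hN : |N - a| ≤ K * s ^ a)
    (hu : |u - α * s| ≤ K * s ^ (1 + a)) (hD : m * s ≤ s / 2 - u) :
    |N / (s / 2 - u) - β * s⁻¹| ≤ K * (1 + β) / m * s ^ (a - 1) := by
  have hDpos : 0 < s / 2 - u := (mul_pos hm hs).trans_le hD
  have key : N / (s / 2 - u) - β * s⁻¹ = ((N - a) + β * ((u - α * s) / s)) / (s / 2 - u) := by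
    rw [eq_div_iff hDpos.ne', sub_mul, div_mul_cancel₀ _ hDpos.ne', ← hβa]; field_simp; ring
  have hnum : |(N - a) + β * ((u - α * s) / s)| ≤ K * (1 + β) * s ^ a :=
    calc |(N - a) + β * ((u - α * s) / s)| ≤ |N - a| + β * (|u - α * s| / s) :=
          (abs_add_le _ _).trans_eq (by rw [abs_mul, abs_div, abs_of_pos hβ, abs_of_pos hs])
      _ ≤ K * s ^ a + β * (K * s ^ (1 + a) / s) := by gcongr
      _ = K * (1 + β) * s ^ a := by rw [rpow_add hs, rpow_one]; field_simp
  calc |N / (s / 2 - u) - β * s⁻¹|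
      = |(N - a) + β * ((u - α * s) / s)| / (s / 2 - u) := by rw [key, abs_div, abs_of_pos hDpos]
    _ ≤ K * (1 + β) * s ^ a / (m * s) :=
        div_le_div₀ ((abs_nonneg _).trans hnum) hnum (mul_pos hm hs) hD
    _ = K * (1 + β) / m * s ^ (a - 1) := by rw [rpow_sub hs, rpow_one]; field_simp

lemma intervalIntegrable_of_abs_le_rpow {g : ℝ → ℝ} {C a δ : ℝ} (ha : 0 < a) (hδ : 0 ≤ δ)
    (hg : AEStronglyMeasurable g (volume.restrict (Ioc 0 δ)))
    (hbound : ∀ s ∈ Ioc 0 δ, |g s| ≤ C * s ^ (a - 1)) : IntervalIntegrable g volume 0 δ := by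
  have hrpow := (intervalIntegral.intervalIntegrable_rpow' (a := 0) (b := δ)
    (by linarith : (-1 : ℝ) < a - 1)).const_mul C
  rw [intervalIntegrable_iff_integrableOn_Ioc_of_le hδ] at hrpow ⊢
  refine hrpow.mono' hg ?_
  filter_upwards [ae_restrict_mem measurableSet_Ioc] with s hs
  exact hbound s hs

lemma abs_intervalIntegral_le_of_abs_le_rpow {g : ℝ → ℝ} {C a r : ℝ} (ha : 0 < a) (hr : 0 ≤ r)
    (hbound : ∀ s ∈ Ioc 0 r, |g s| ≤ C * s ^ (a - 1)) :
    |∫ s in 0..r, g s| ≤ C / a * r ^ a := by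
  have hint : ∫ s in 0..r, C * s ^ (a - 1) = C / a * r ^ a := by
    rw [intervalIntegral.integral_const_mul, integral_rpow (Or.inl (by linarith)), sub_add_cancel,
      zero_rpow ha.ne']
    ring
  rw [← hint]
  exact intervalIntegral.norm_integral_le_of_norm_le (f := g) hr (ae_of_all _ hbound)
    ((intervalIntegral.intervalIntegrable_rpow' (r := a - 1) (by linarith)).const_mul C)

lemma exp_integral_eq_rpow_mul_exp {f : ℝ → ℝ} {β δ r : ℝ} (hr : 0 < r) (hrδ : r ≤ δ)
    (hg : IntervalIntegrable (fun s => f s - β * s⁻¹) volume 0 δ) :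
    exp (∫ s in δ..r, f s) = (r / δ) ^ β *
      exp ((∫ s in 0..r, f s - β * s⁻¹) - ∫ s in 0..δ, f s - β * s⁻¹) := by
  have hδ : 0 < δ := hr.trans_le hrδ
  have hg_r : IntervalIntegrable (fun s => f s - β * s⁻¹) volume 0 r := by
    refine hg.mono_set ?_
    rw [uIcc_of_le hr.le, uIcc_of_le hδ.le]
    exact Icc_subset_Icc_right hrδ
  have hinv : IntervalIntegrable (fun s : ℝ => β * s⁻¹) volume δ r := by
    refine (intervalIntegral.intervalIntegrable_inv (fun s hs => ?_) continuousOn_id).const_mul β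
    rw [uIcc_of_ge hrδ] at hs
    exact (hr.trans_le hs.1).ne'
  have hsplit : ∫ s in δ..r, f s = β * log (r / δ) +
      ((∫ s in 0..r, f s - β * s⁻¹) - ∫ s in 0..δ, f s - β * s⁻¹) :=
    calc ∫ s in δ..r, f s = ∫ s in δ..r, (β * s⁻¹ + (f s - β * s⁻¹)) := by
          simp only [add_sub_cancel]
      _ = (∫ s in δ..r, β * s⁻¹) + ∫ s in δ..r, f s - β * s⁻¹ :=
          intervalIntegral.integral_add hinv (hg.symm.trans hg_r)
      _ = _ := by
          rw [intervalIntegral.integral_const_mul, integral_inv_of_pos hδ hr,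
            intervalIntegral.integral_interval_sub_left hg_r hg]
  rw [hsplit, exp_add, rpow_def_of_pos (div_pos hr hδ), mul_comm (log _)]

lemma exists_abs_sub_rpow_le_of_eq_rpow_mul_exp {P G : ℝ → ℝ} {δ Pδ a β M : ℝ} (hδ : 0 < δ)
    (hPδ : 0 < Pδ) (ha : 0 < a) (hG : ∀ r ∈ Ioc 0 δ, |G r| ≤ M * r ^ a)
    (hP : ∀ r ∈ Ioc 0 δ, P r = Pδ * ((r / δ) ^ β * exp (G r - G δ))) :
    ∃ c > 0, ∃ C > 0,
      (∀ r ∈ Ioc 0 δ, |P r - c * Pδ * (r / δ) ^ β| ≤ C * Pδ * (r / δ) ^ β * r ^ a) ∧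
      ∀ r ∈ Ioc 0 δ, |P r| ≤ C * Pδ * r ^ β := by
  set c := exp (-G δ)
  set E := exp (M * δ ^ a)
  have hM : 0 ≤ M :=
    nonneg_of_mul_nonneg_left ((abs_nonneg _).trans (hG δ ⟨hδ, le_rfl⟩)) (rpow_pos_of_pos hδ a)
  have hGE : ∀ r ∈ Ioc 0 δ, exp |G r| ≤ E := fun r hr =>
    exp_le_exp.mpr ((hG r hr).trans
      (mul_le_mul_of_nonneg_left (rpow_le_rpow hr.1.le hr.2 ha.le) hM))
  have hPc : ∀ r ∈ Ioc 0 δ, P r = c * Pδ * (r / δ) ^ β * exp (G r) := fun r hr => by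
    rw [hP r hr, sub_eq_neg_add, exp_add]; ring
  have hX : ∀ r ∈ Ioc 0 δ, 0 < c * Pδ * (r / δ) ^ β := fun r hr => by
    have := rpow_pos_of_pos (div_pos hr.1 hδ) β
    positivity
  have hcE : 0 < c * E / δ ^ β := div_pos (mul_pos (exp_pos _) (exp_pos _)) (rpow_pos_of_pos hδ β)
  refine ⟨c, exp_pos _, max (c * E * M) (c * E / δ ^ β), lt_max_of_lt_right hcE,
    fun r hr => ?_, fun r hr => ?_⟩
  · calc |P r - c * Pδ * (r / δ) ^ β| = c * Pδ * (r / δ) ^ β * |exp (G r) - 1| := by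
          rw [hPc r hr, ← mul_sub_one, abs_mul, abs_of_pos (hX r hr)]
      _ ≤ c * Pδ * (r / δ) ^ β * (M * r ^ a * E) := by
          have := (hX r hr).le
          gcongr
          exact (abs_exp_sub_one_le_mul_exp_abs _).trans
            (mul_le_mul (hG r hr) (hGE r hr) (exp_pos _).le ((abs_nonneg _).trans (hG r hr)))
      _ = c * E * M * Pδ * (r / δ) ^ β * r ^ a := by ring
      _ ≤ _ := by
          have := rpow_nonneg hr.1.le a
          have := rpow_nonneg (div_pos hr.1 hδ).le β
          gcongr
          exact le_max_left _ _
  · calc |P r| = c * Pδ * (r / δ) ^ β * exp (G r) := by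
          rw [hPc r hr, abs_of_pos (mul_pos (hX r hr) (exp_pos _))]
      _ ≤ c * Pδ * (r / δ) ^ β * E := by
          have := (hX r hr).le
          gcongr
          exact (exp_le_exp.mpr (le_abs_self _)).trans (hGE r hr)
      _ = c * E / δ ^ β * Pδ * r ^ β := by rw [div_rpow hr.1.le hδ.le]; ring
      _ ≤ _ := by
          have := rpow_nonneg hr.1.le β
          gcongr
          exact le_max_right _ _

theorem vacuum_density_holder_general
    (d : ℕ) (hd : 1 ≤ d) (α δ K Pδ : ℝ)
    (hα0 : 0 < α) (hα : α < 1/2) (hδ : 0 < δ) (hPδ : 0 < Pδ)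
    (U : ℝ → ℝ) (hU : ContDiffOn ℝ 1 U (Ioc 0 δ))
    (hpos : ∀ r ∈ Ioc (0:ℝ) δ, 0 < (1/2) * r - U r)
    (h1 : ∀ r ∈ Ioc (0:ℝ) δ,
      |deriv U r + ((d : ℝ) - 1) * U r / r - (d : ℝ) * α| ≤ K * r ^ ((d : ℝ) * α))
    (h2 : ∀ r ∈ Ioc (0:ℝ) δ, |U r - α * r| ≤ K * r ^ (1 + (d : ℝ) * α)) :
    ∃ c > (0:ℝ), ∃ C > (0:ℝ),
      (∀ r ∈ Ioc (0:ℝ) δ,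
        |Pvac d δ Pδ U r - c * Pδ * (r / δ) ^ (2 * (d : ℝ) * α / (1 - 2 * α))|
          ≤ C * Pδ * (r / δ) ^ (2 * (d : ℝ) * α / (1 - 2 * α)) * r ^ ((d : ℝ) * α)) ∧
      Tendsto (Pvac d δ Pδ U) (𝓝[>] (0:ℝ)) (𝓝 0) ∧
      ∀ r ∈ Ioc (0:ℝ) δ,
        |Pvac d δ Pδ U r| ≤ C * Pδ * r ^ (2 * (d : ℝ) * α / (1 - 2 * α)) := by
  set a := (d : ℝ) * α with ha_def
  set β := 2 * (d : ℝ) * α / (1 - 2 * α) with hβ_def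
  have ha : 0 < a := mul_pos (Nat.cast_pos.mpr hd) hα0
  have h2α : 0 < 1 - 2 * α := by linarith
  have hβ : 0 < β := div_pos (by linarith) h2α
  have hβa : β * (1 / 2 - α) = a := by rw [hβ_def, ha_def]; field_simp [h2α.ne']
  obtain ⟨m, hm, hmD⟩ := exists_pos_mul_le_of_continuousOn (D := fun s => s / 2 - U s)
    (by linarith : 0 < (1 / 2 - α) / 2) ((continuousOn_id.div_const 2).sub hU.continuousOn)
    (fun s hs => by linarith [hpos s hs]) (eventually_mul_le_half_sub hα ha hδ h2)
  set g := fun s => (deriv U s + ((d : ℝ) - 1) * U s / s) / (s / 2 - U s) - β * s⁻¹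
  have hg : ∀ s ∈ Ioc 0 δ, |g s| ≤ K * (1 + β) / m * s ^ (a - 1) := fun s hs =>
    abs_div_sub_inv_le hs.1 hm hβ hβa (h1 s hs) (h2 s hs) (hmD s hs)
  have hgmeas : AEStronglyMeasurable g (volume.restrict (Ioc 0 δ)) := by
    have hUm : AEMeasurable U (volume.restrict (Ioc 0 δ)) :=
      hU.continuousOn.aemeasurable measurableSet_Ioc
    have := measurable_deriv U
    simp only [g]
    exact (by fun_prop : AEMeasurable _ _).aestronglyMeasurable
  obtain ⟨c, hc, C, hC, hexp, hglob⟩ := exists_abs_sub_rpow_le_of_eq_rpow_mul_exp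
    (P := Pvac d δ Pδ U) (G := fun r => ∫ s in 0..r, g s) hδ hPδ ha
    (fun r hr => abs_intervalIntegral_le_of_abs_le_rpow ha hr.1.le
      fun s hs => hg s ⟨hs.1, hs.2.trans hr.2⟩)
    (fun r hr => by
      unfold Pvac
      rw [exp_integral_eq_rpow_mul_exp hr.1 hr.2
        (intervalIntegrable_of_abs_le_rpow ha hδ.le hgmeas hg)])
  exact ⟨c, hc, C, hC, hexp, tendsto_nhdsGT_zero_of_abs_le_rpow hβ hδ hglob, hglob⟩

/-- Power-law expansion of the cavitating density at the origin:
`P(r) = c P_δ (r/δ)^{2dα/(1−2α)} (1 + O(r^{dα}))`; in particular `P(0⁺) = 0` and `P` is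
Hölder continuous of exponent `2dα/(1−2α)` at the origin. -/
theorem vacuum_density_holder
    (d : ℕ) (hd : 1 ≤ d) (α δ K Pδ : ℝ)
    (hα0 : 0 < α) (hα : α < 1/2) (hδ : 0 < δ) (hK : 0 < K) (hPδ : 0 < Pδ)
    (U : ℝ → ℝ) (hU : ContDiffOn ℝ 1 U (Ioc 0 δ))
    (hpos : ∀ r ∈ Ioc (0:ℝ) δ, 0 < (1/2) * r - U r)
    (h1 : ∀ r ∈ Ioc (0:ℝ) δ,
      |deriv U r + ((d : ℝ) - 1) * U r / r - (d : ℝ) * α| ≤ K * r ^ ((d : ℝ) * α))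
    (h2 : ∀ r ∈ Ioc (0:ℝ) δ, |U r - α * r| ≤ K * r ^ (1 + (d : ℝ) * α)) :
    ∃ c > (0:ℝ), ∃ C > (0:ℝ),
      (∀ r ∈ Ioc (0:ℝ) δ,
        |Pvac d δ Pδ U r - c * Pδ * (r / δ) ^ (2 * (d : ℝ) * α / (1 - 2 * α))|
          ≤ C * Pδ * (r / δ) ^ (2 * (d : ℝ) * α / (1 - 2 * α)) * r ^ ((d : ℝ) * α)) ∧
      Tendsto (Pvac d δ Pδ U) (𝓝[>] (0:ℝ)) (𝓝 0) ∧
      ∀ r ∈ Ioc (0:ℝ) δ,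
        |Pvac d δ Pδ U r| ≤ C * Pδ * r ^ (2 * (d : ℝ) * α / (1 - 2 * α)) :=
  vacuum_density_holder_general d hd α δ K Pδ hα0 hα hδ hPδ U hU hpos h1 h2
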